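/- Let (A,B) be a Pythagorean pair on 𝔥 and let p = c^∞ be a periodic ray with prime period c of length d ≥ 2. If ξ ∈ 𝔥 is a nonzero vector contained in p, then the vectors p_1ξ, p_2ξ, …, p_dξ are pairwise orthogonal. -/

import Mathlib

open Filter Topology

noncomputable def pythWord {H : Type*} [NormedAddCommGroup H] [InnerProductSpace ℂ H]
    (A B : H →L[ℂ] H) (w : List Bool) : H →L[ℂ] H :=
  (w.map (fun x => if x then B else A)).prod

/-- The operator `p_n` given by composing the operators of the first `n` letters of the
ray `p` (first letter applied first). `false` stands for `a ↦ A`, `true` for `b ↦ B`. -/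
noncomputable def rayOp {H : Type*} [NormedAddCommGroup H] [InnerProductSpace ℂ H]
    (A B : H →L[ℂ] H) (p : ℕ → Bool) (n : ℕ) : H →L[ℂ] H :=
  pythWord A B ((List.range n).reverse.map p)

/-!
Each letter of a ray selects one of `A`, `B`. Since `‖A u‖² + ‖B u‖² = ‖u‖²`, a vector contained
in a ray is killed by the operator of the letter *not* chosen by the ray, so in
`⟪x, y⟫ = ⟪A x, A y⟫ + ⟪B x, B y⟫` one summand vanishes and the other is the inner product of
vectors contained in the tails of the rays. Following two rays until they first differ shows that
vectors contained in distinct rays are orthogonal. For `1 ≤ i < j ≤ d`, equality of the shifted rays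
`p(· + i)` and `p(· + j)` would give `p` the period `gcd (j - i) d`, a proper divisor of `d`, making
`c` a proper power.
-/

namespace Function.Periodic

variable {α : Type*} {f : ℕ → α} {a b : ℕ}

theorem nat_mod (ha : Periodic f a) (hb : Periodic f b) : Periodic f (b % a) := fun x => by
  rw [← ha.nat_mul (b / a) (x + b % a), Nat.cast_id, add_assoc, mul_comm, Nat.mod_add_div, hb]

theorem nat_gcd (ha : Periodic f a) (hb : Periodic f b) : Periodic f (a.gcd b) := by
  induction a, b using Nat.gcd.induction with
  | H0 n => simpa using hb
  | H1 m n _ ih => rw [Nat.gcd_rec]; exact ih (ha.nat_mod hb) ha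

theorem sub_of_add_eq_add {L i j : ℕ} (hL : Periodic f L) (hiL : i ≤ L) (hij : i ≤ j)
    (h : ∀ m, f (m + i) = f (m + j)) : Periodic f (j - i) := fun m => by
  have := h (m + L - i)
  rwa [Nat.sub_add_cancel (by omega), show m + L - i + j = m + (j - i) + L by omega, hL, hL,
    eq_comm] at this

theorem map_range_mul (hf : Periodic f a) (k : ℕ) :
    (List.range (k * a)).map f = (List.replicate k ((List.range a).map f)).flatten := by
  induction k with
  | zero => simp
  | succ k ih =>
    rw [Nat.succ_mul, List.range_add, List.map_append, ih, List.replicate_succ',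
      List.flatten_append, List.map_map]
    congr 1
    simp only [List.flatten_cons, List.flatten_nil, List.append_nil]
    exact List.map_congr_left fun x _ => by simpa [add_comm] using hf.nat_mul k x

end Function.Periodic

theorem List.eq_map_range_of_getD_mod {c : List Bool} {p : ℕ → Bool}
    (hp : ∀ n, p n = c.getD (n % c.length) false) : c = (List.range c.length).map p := by
  refine List.ext_getElem (by simp) fun n h _ => ?_
  rw [List.getElem_map, List.getElem_range, hp, Nat.mod_eq_of_lt h, List.getD_eq_getElem]

theorem periodic_length_of_getD_mod {c : List Bool} {p : ℕ → Bool}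
    (hp : ∀ n, p n = c.getD (n % c.length) false) : Function.Periodic p c.length := fun n => by
  rw [hp, hp, Nat.add_mod_right]

theorem not_periodic_of_not_exists_eq_flatten_replicate {c : List Bool} {p : ℕ → Bool}
    (hprime : ¬ ∃ (e : List Bool) (k : ℕ), 1 < k ∧ c = (List.replicate k e).flatten)
    (hp : ∀ n, p n = c.getD (n % c.length) false) {t : ℕ} (ht0 : 0 < t) (htc : t < c.length) :
    ¬ Function.Periodic p t := by
  intro ht
  set g := t.gcd c.length
  obtain ⟨k, hk⟩ := Nat.gcd_dvd_right t c.length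
  have hg0 : 0 < g := Nat.gcd_pos_of_pos_left _ ht0
  have hglt : g < c.length := (Nat.gcd_le_left _ ht0).trans_lt htc
  have hk1 : 1 < k := by
    by_contra! hk1
    interval_cases k <;> omega
  have hg : Function.Periodic p g := ht.nat_gcd (periodic_length_of_getD_mod hp)
  refine hprime ⟨(List.range g).map p, k, hk1, ?_⟩
  calc c = (List.range c.length).map p := List.eq_map_range_of_getD_mod hp
    _ = _ := by rw [hk, mul_comm]; exact hg.map_range_mul k

section RayOp

variable {H : Type*} [NormedAddCommGroup H] [InnerProductSpace ℂ H] (A B : H →L[ℂ] H)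

noncomputable def letterOp (b : Bool) : H →L[ℂ] H := if b then B else A

theorem rayOp_zero (p : ℕ → Bool) : rayOp A B p 0 = 1 := rfl

theorem rayOp_succ (p : ℕ → Bool) (n : ℕ) :
    rayOp A B p (n + 1) = letterOp A B (p n) * rayOp A B p n := by
  simp [rayOp, pythWord, letterOp, List.range_succ]

theorem rayOp_one (p : ℕ → Bool) : rayOp A B p 1 = letterOp A B (p 0) := by
  rw [rayOp_succ, rayOp_zero, mul_one]

theorem rayOp_add (p : ℕ → Bool) (n i : ℕ) :
    rayOp A B p (n + i) = rayOp A B (fun m => p (m + i)) n * rayOp A B p i := by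
  induction n with
  | zero => rw [zero_add, rayOp_zero, one_mul]
  | succ n ih => rw [Nat.add_right_comm, rayOp_succ, rayOp_succ, ih, mul_assoc]

def IsContainedInRay (p : ℕ → Bool) (ξ : H) : Prop := ∀ n, ‖rayOp A B p n ξ‖ = ‖ξ‖

variable {A B}

theorem IsContainedInRay.shift {p : ℕ → Bool} {ξ : H} (h : IsContainedInRay A B p ξ) (i : ℕ) :
    IsContainedInRay A B (fun m => p (m + i)) (rayOp A B p i ξ) := fun n => by
  rw [← mul_apply_eq_comp, ← rayOp_add, h, h]

theorem IsContainedInRay.tail {p : ℕ → Bool} {ξ : H} (h : IsContainedInRay A B p ξ) :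
    IsContainedInRay A B (fun m => p (m + 1)) (letterOp A B (p 0) ξ) := by
  simpa only [rayOp_one] using h.shift 1

end RayOp

section Pythagorean

variable {H : Type*} [NormedAddCommGroup H] [InnerProductSpace ℂ H] [CompleteSpace H]
  {A B : H →L[ℂ] H}

theorem inner_eq_inner_letterOp_add
    (hpyth : (ContinuousLinearMap.adjoint A).comp A
      + (ContinuousLinearMap.adjoint B).comp B = 1) (b : Bool) (u v : H) :
    inner ℂ u v = inner ℂ (letterOp A B b u) (letterOp A B b v)
      + inner ℂ (letterOp A B (!b) u) (letterOp A B (!b) v) := by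
  have hu : (ContinuousLinearMap.adjoint A) (A u) + (ContinuousLinearMap.adjoint B) (B u) = u := by
    simpa using congrArg (fun T : H →L[ℂ] H => T u) hpyth
  have hAB : inner ℂ u v = inner ℂ (A u) (A v) + inner ℂ (B u) (B v) := by
    conv_lhs => rw [← hu]
    rw [inner_add_left, ContinuousLinearMap.adjoint_inner_left,
      ContinuousLinearMap.adjoint_inner_left]
  cases b
  · exact hAB
  · rw [hAB, add_comm]; rfl

theorem IsContainedInRay.letterOp_not_eq_zero
    (hpyth : (ContinuousLinearMap.adjoint A).comp A
      + (ContinuousLinearMap.adjoint B).comp B = 1)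
    {p : ℕ → Bool} {ξ : H} (h : IsContainedInRay A B p ξ) : letterOp A B (!p 0) ξ = 0 := by
  have hsq := inner_eq_inner_letterOp_add hpyth (p 0) ξ ξ
  simp only [inner_self_eq_norm_sq_to_K, ← rayOp_one, h 1] at hsq
  norm_cast at hsq
  have : ‖letterOp A B (!p 0) ξ‖ ^ 2 = 0 := by linarith
  simpa using this

theorem IsContainedInRay.inner_eq_zero_of_apply_zero_ne
    (hpyth : (ContinuousLinearMap.adjoint A).comp A
      + (ContinuousLinearMap.adjoint B).comp B = 1)
    {q r : ℕ → Bool} {x y : H} (hx : IsContainedInRay A B q x) (hy : IsContainedInRay A B r y)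
    (h0 : q 0 ≠ r 0) : inner ℂ x y = 0 := by
  have hy0 := hy.letterOp_not_eq_zero hpyth
  rw [Bool.eq_not_of_ne (Ne.symm h0), Bool.not_not] at hy0
  rw [inner_eq_inner_letterOp_add hpyth (q 0), hx.letterOp_not_eq_zero hpyth, hy0,
    inner_zero_right, inner_zero_left, add_zero]

theorem IsContainedInRay.inner_eq_zero_of_ne
    (hpyth : (ContinuousLinearMap.adjoint A).comp A
      + (ContinuousLinearMap.adjoint B).comp B = 1)
    {q r : ℕ → Bool} {x y : H} (hx : IsContainedInRay A B q x) (hy : IsContainedInRay A B r y)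
    (hqr : q ≠ r) : inner ℂ x y = 0 := by
  obtain ⟨n, hn⟩ := Function.ne_iff.1 hqr
  clear hqr
  induction n generalizing q r x y with
  | zero => exact hx.inner_eq_zero_of_apply_zero_ne hpyth hy hn
  | succ n ih =>
    by_cases h0 : q 0 = r 0
    · rw [inner_eq_inner_letterOp_add hpyth (q 0), hx.letterOp_not_eq_zero hpyth, inner_zero_left,
        add_zero]
      have hy' := hy.tail
      rw [← h0] at hy'
      exact ih hx.tail hy' hn
    · exact hx.inner_eq_zero_of_apply_zero_ne hpyth hy h0

end Pythagorean

theorem pythagorean_pair_prime_period_orthogonal_family_general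
    {H : Type*} [NormedAddCommGroup H] [InnerProductSpace ℂ H] [CompleteSpace H]
    (A B : H →L[ℂ] H)
    (hpyth : (ContinuousLinearMap.adjoint A).comp A
      + (ContinuousLinearMap.adjoint B).comp B = 1)
    (c : List Bool)
    (hprime : ¬ ∃ (e : List Bool) (k : ℕ), 1 < k ∧ c = (List.replicate k e).flatten)
    (p : ℕ → Bool) (hp : ∀ n, p n = c.getD (n % c.length) false)
    (ξ : H) (hξ : ∀ n, ‖rayOp A B p n ξ‖ = ‖ξ‖) :
    ∀ i j : ℕ, 1 ≤ i → i < j → j ≤ c.length →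
      (inner ℂ (rayOp A B p i ξ) (rayOp A B p j ξ) : ℂ) = 0 := by
  intro i j hi hij hjc
  have hξ : IsContainedInRay A B p ξ := hξ
  refine (hξ.shift i).inner_eq_zero_of_ne hpyth (hξ.shift j) fun hshift => ?_
  have hperiodic : Function.Periodic p (j - i) :=
    (periodic_length_of_getD_mod hp).sub_of_add_eq_add (by omega) hij.le (congrFun hshift)
  exact not_periodic_of_not_exists_eq_flatten_replicate hprime hp (by omega) (by omega) hperiodic

theorem pythagorean_pair_prime_period_orthogonal_family
    {H : Type*} [NormedAddCommGroup H] [InnerProductSpace ℂ H] [CompleteSpace H]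
    (A B : H →L[ℂ] H)
    (hpyth : (ContinuousLinearMap.adjoint A).comp A
      + (ContinuousLinearMap.adjoint B).comp B = 1)
    (c : List Bool) (hlen : 2 ≤ c.length)
    (hprime : ¬ ∃ (e : List Bool) (k : ℕ), 1 < k ∧ c = (List.replicate k e).flatten)
    (p : ℕ → Bool) (hp : ∀ n, p n = c.getD (n % c.length) false)
    (ξ : H) (hξ0 : ξ ≠ 0) (hξ : ∀ n, ‖rayOp A B p n ξ‖ = ‖ξ‖) :
    ∀ i j : ℕ, 1 ≤ i → i < j → j ≤ c.length →
      (inner ℂ (rayOp A B p i ξ) (rayOp A B p j ξ) : ℂ) = 0 :=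
  pythagorean_pair_prime_period_orthogonal_family_general A B hpyth c hprime p hp ξ hξ
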